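/- arXiv:1809.07459 — 2 statements merged into one kernel-verified Lean document; each statement's English description precedes it below -/
import Mathlib

section
/- There exist infinitely many positive integers k such that the odd density of p(·,k) is at most 2/3: for every positive integer K there exists k ≥ K with lim_{N→∞} #{n ≤ N : p(n,k) is odd}/N ≤ 2/3. -/
/-!
Everything rests on the recurrence `p (n + (k + 1)) (k + 1) = p (n + (k + 1)) k + p n (k + 1)`
(split off one part equal to `k + 1`, if any). Read in `ZMod 2`, it says that the parity sequence
of `p · (k + 1)` is a discrete antiderivative, with step `k + 1`, of that of `p · k`; if the
latter has period `Q`, the increments over `2Q` steps cancel in pairs. So, by induction from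
`p n 1 = 1`, every parity sequence is periodic, and each odd density is the proportion of odd
values over a period.

The same recurrence shows that whenever `p (n + (k + 1)) k` is odd, one of `p n (k + 1)` and
`p (n + (k + 1)) (k + 1)` is even. Counting over a common period gives
`d k ≤ 2 (1 - d (k + 1))` for the odd densities, so `d k` or `d (k + 1)` is at most `2 / 3`.
-/

/-- `p n k` is the number of partitions of `n` into parts each of size at most `k`
(with `p 0 k = 1`). -/
def p (n k : ℕ) : ℕ :=
  (Finset.univ.filter (fun P : n.Partition => ∀ i ∈ P.parts, i ≤ k)).card

open Function Filter Topology Finset Nat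

theorem card_filter_le_and_mem_parts {N m k : ℕ} (hm : 1 ≤ m) (hmN : m ≤ N) (hmk : m ≤ k) :
    #{P : N.Partition | (∀ i ∈ P.parts, i ≤ k) ∧ m ∈ P.parts} = p (N - m) k := by
  rw [p, ← Fintype.card_subtype, ← Fintype.card_subtype]
  refine Fintype.card_congr <| (Equiv.subtypeEquivRight fun _ => and_comm).trans <|
    (Equiv.subtypeSubtypeEquivSubtypeInter _ _).symm.trans <|
    (Nat.Partition.partitionWithPartEquiv hm hmN).subtypeEquiv fun P => ?_
  simp only [Nat.Partition.partitionWithPartEquiv_apply_parts]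
  refine ⟨fun h i hi => h i (Multiset.mem_of_mem_erase hi), fun h i hi => ?_⟩
  rcases eq_or_ne i m with rfl | hne
  · exact hmk
  · exact h i ((Multiset.mem_erase_of_ne hne).2 hi)

theorem p_add_succ (n k : ℕ) : p (n + (k + 1)) (k + 1) = p (n + (k + 1)) k + p n (k + 1) := by
  have hwithout :
      #{P : (n + (k + 1)).Partition | (∀ i ∈ P.parts, i ≤ k + 1) ∧ k + 1 ∉ P.parts} =
        p (n + (k + 1)) k := by
    refine congrArg card (filter_congr fun P _ => ⟨fun ⟨hle, hne⟩ i hi => ?_, fun h => ?_⟩)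
    · exact Nat.le_of_lt_succ ((hle i hi).lt_of_ne (ne_of_mem_of_not_mem hi hne))
    · exact ⟨fun i hi => (h i hi).trans k.le_succ, fun hk => (h _ hk).not_gt k.lt_succ_self⟩
  have hwith := card_filter_le_and_mem_parts (N := n + (k + 1)) (by omega) le_add_self le_rfl
  rw [Nat.add_sub_cancel] at hwith
  rw [← hwithout, ← hwith, p, ← filter_filter, ← filter_filter]
  exact (card_filter_add_card_filter_not _).symm.trans (add_comm _ _)

theorem p_zero_left (k : ℕ) : p 0 k = 1 := by
  simp [p]

theorem p_succ_zero (n : ℕ) : p (n + 1) 0 = 0 := by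
  refine Finset.card_eq_zero.2 (filter_eq_empty_iff.2 fun P _ hP => ?_)
  have hne : P.parts ≠ 0 := fun h => n.succ_ne_zero (by simp [← P.parts_sum, h])
  obtain ⟨i, hi⟩ := Multiset.exists_mem_of_ne_zero hne
  exact (P.parts_pos hi).ne' (Nat.le_zero.1 (hP i hi))

theorem p_one (n : ℕ) : p n 1 = 1 := by
  induction n with
  | zero => exact p_zero_left 1
  | succ n ih => rw [p_add_succ n 0, p_succ_zero, ih]

theorem add_mul_eq_sum_add {M : Type*} [AddCommMonoid M] {f g : ℕ → M} {c : ℕ}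
    (hfg : ∀ n, f (n + c) = g (n + c) + f n) (n m : ℕ) :
    f (n + m * c) = ∑ i ∈ range m, g (n + (i + 1) * c) + f n := by
  induction m with
  | zero => simp
  | succ m ih =>
    rw [sum_range_succ, add_mul, one_mul, ← add_assoc, hfg, ih, add_assoc n]
    abel

theorem CharTwo.periodic_of_add_eq_add_of_periodic {R : Type*} [Ring R] [CharP R 2]
    {f g : ℕ → R} {c Q : ℕ} (hfg : ∀ n, f (n + c) = g (n + c) + f n) (hg : Periodic g Q) :
    Periodic f (2 * Q * c) := by
  intro n
  have hshift (i : ℕ) : g (n + (Q + i + 1) * c) = g (n + (i + 1) * c) := by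
    rw [show n + (Q + i + 1) * c = n + (i + 1) * c + c * Q by ring]
    exact hg.nat_mul c _
  rw [two_mul, add_mul_eq_sum_add hfg, sum_range_add, sum_congr rfl fun i _ => hshift i,
    CharTwo.add_self_eq_zero, zero_add]

theorem exists_periodic_p_cast {k : ℕ} (hk : 0 < k) :
    ∃ Q, 0 < Q ∧ Periodic (fun n => (p n k : ZMod 2)) Q := by
  induction k, hk using Nat.le_induction with
  | base => exact ⟨1, one_pos, fun n => by simp only [p_one]⟩
  | succ k _ ih =>
    obtain ⟨Q, hQ, hper⟩ := ih
    refine ⟨2 * Q * (k + 1), by positivity,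
      CharTwo.periodic_of_add_eq_add_of_periodic (fun n => ?_) hper⟩
    rw [p_add_succ, Nat.cast_add]

theorem exists_periodic_odd_p {k : ℕ} (hk : 0 < k) :
    ∃ Q, 0 < Q ∧ Periodic (fun n => Odd (p n k)) Q := by
  obtain ⟨Q, hQ, hper⟩ := exists_periodic_p_cast hk
  refine ⟨Q, hQ, fun n => ?_⟩
  simp only [← ZMod.natCast_eq_one_iff_odd, hper n]

theorem tendsto_div_of_abs_sub_mul_le {a : ℕ → ℝ} {d C : ℝ}
    (h : ∀ N, |a N - d * N| ≤ C) :
    Tendsto (fun N : ℕ => a N / N) atTop (𝓝 d) := by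
  rw [tendsto_iff_norm_sub_tendsto_zero]
  refine squeeze_zero' (.of_forall fun _ => norm_nonneg _) ?_
    (tendsto_const_div_atTop_nhds_zero_nat C)
  filter_upwards [eventually_gt_atTop 0] with N hN
  have hN' : (0 : ℝ) < N := by exact_mod_cast hN
  rw [Real.norm_eq_abs, ← mul_div_cancel_right₀ d hN'.ne', ← sub_div, abs_div,
    abs_of_pos hN']
  exact div_le_div_of_nonneg_right (h N) hN'.le

theorem Nat.count_add_count_not (S : ℕ → Prop) [DecidablePred S] (n : ℕ) :
    count S n + count (fun k => ¬S k) n = n := by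
  simp only [count_eq_card_filter_range, card_filter_add_card_filter_not, card_range]

namespace Function.Periodic

variable {S T : ℕ → Prop} [DecidablePred S] [DecidablePred T] {P : ℕ}

theorem count_comp_add_one (hS : Periodic S P) : count (fun k => S (k + 1)) P = count S P := by
  have h := count_succ' S P
  simp only [count_succ, hS.eq] at h
  omega

theorem count_comp_add (hS : Periodic S P) (c : ℕ) :
    count (fun k => S (k + c)) P = count S P := by
  induction c with
  | zero => rfl
  | succ c ih =>
    rw [← ih, ← (hS.add_const c).count_comp_add_one]
    simp only [add_right_comm _ 1 c]
    rfl

theorem count_add_period (hS : Periodic S P) (a : ℕ) :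
    count S (a + P) = count S a + count S P := by
  rw [count_add]
  simp only [add_comm a]
  rw [hS.count_comp_add]

theorem count_add_mul (hS : Periodic S P) (a q : ℕ) :
    count S (a + q * P) = count S a + q * count S P := by
  induction q with
  | zero => simp
  | succ q ih => rw [succ_mul, ← add_assoc, hS.count_add_period, ih, succ_mul, add_assoc]

theorem abs_count_sub_le (hS : Periodic S P) (hP : 0 < P) (m : ℕ) :
    |(count S m : ℝ) - count S P / P * m| ≤ P := by
  set d : ℝ := count S P / P
  have hP' : (0 : ℝ) < P := by exact_mod_cast hP
  have hd : d ≤ 1 := div_le_one_of_le₀ (by exact_mod_cast count_le S) hP'.le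
  have hshift : (count S m : ℝ) - d * m = count S (m % P) - d * (m % P : ℕ) := by
    conv_lhs => rw [← mod_add_div' m P, hS.count_add_mul]
    push_cast
    simp only [d]
    field_simp
    ring
  have hr : ((m % P : ℕ) : ℝ) ≤ P := by exact_mod_cast (mod_lt m hP).le
  rw [hshift]
  refine abs_sub_le_of_nonneg_of_le (by positivity) ?_ (by positivity) ?_
  · exact (Nat.cast_le.2 (count_le S)).trans hr
  · exact (mul_le_of_le_one_left (by positivity) hd).trans hr

theorem tendsto_count_div (hS : Periodic S P) (hP : 0 < P) :
    Tendsto (fun N : ℕ => (count S (N + 1) : ℝ) / N) atTop (𝓝 (count S P / P)) := by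
  refine tendsto_div_of_abs_sub_mul_le (C := P + 1) fun N => ?_
  have hd : (count S P : ℝ) / P ≤ 1 :=
    div_le_one_of_le₀ (by exact_mod_cast count_le S) (by positivity)
  calc |(count S (N + 1) : ℝ) - count S P / P * N|
      = |((count S (N + 1) : ℝ) - count S P / P * (N + 1 : ℕ)) + count S P / P| := by
        push_cast; ring_nf
    _ ≤ P + 1 := by
        refine (abs_add_le _ _).trans (add_le_add (hS.abs_count_sub_le hP _) ?_)
        rwa [abs_of_nonneg (by positivity)]

theorem count_le_two_mul_count (hS : Periodic S P) (hT : Periodic T P) {c : ℕ}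
    (h : ∀ n, S (n + c) → T n ∨ T (n + c)) : count S P ≤ 2 * count T P :=
  calc count S P = count (fun n => S (n + c)) P := (hS.count_comp_add c).symm
    _ ≤ count (fun n => T n ∨ T (n + c)) P := count_mono_left fun n _ => h n
    _ ≤ count T P + count (fun n => T (n + c)) P := by
        simp only [count_eq_card_filter_range, filter_or]
        exact card_union_le _ _
    _ = 2 * count T P := by rw [hT.count_comp_add, two_mul]

end Function.Periodic

theorem not_odd_p_or_not_odd_p_of_odd_p {n k : ℕ} (h : Odd (p (n + (k + 1)) k)) :
    ¬Odd (p n (k + 1)) ∨ ¬Odd (p (n + (k + 1)) (k + 1)) := by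
  rw [p_add_succ, Nat.odd_add, ← Nat.not_odd_iff_even]
  tauto

theorem count_odd_p_add_two_mul_count_odd_p_le {k P : ℕ}
    (hk : Periodic (fun n => Odd (p n k)) P) (hk₁ : Periodic (fun n => Odd (p n (k + 1))) P) :
    count (fun n => Odd (p n k)) P + 2 * count (fun n => Odd (p n (k + 1))) P ≤ 2 * P := by
  have := hk.count_le_two_mul_count (fun n => congrArg Not (hk₁ n))
    fun n => not_odd_p_or_not_odd_p_of_odd_p
  have := count_add_count_not (fun n => Odd (p n (k + 1))) P
  omega

theorem exists_odd_density_le_two_thirds {k P : ℕ} (hP : 0 < P)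
    (hk : Periodic (fun n => Odd (p n k)) P) (hc : 3 * count (fun n => Odd (p n k)) P ≤ 2 * P) :
    ∃ d : ℝ, d ≤ 2 / 3 ∧
      Tendsto (fun N : ℕ => (#{n ∈ range (N + 1) | Odd (p n k)} : ℝ) / N) atTop (𝓝 d) := by
  refine ⟨(count (fun n => Odd (p n k)) P : ℝ) / P, ?_, ?_⟩
  · rw [div_le_div_iff₀ (by positivity) (by norm_num)]
    exact_mod_cast (by omega : count (fun n => Odd (p n k)) P * 3 ≤ 2 * P)
  · simpa only [count_eq_card_filter_range] using hk.tendsto_count_div hP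

theorem stmt_8 :
    ∀ K : ℕ, 0 < K → ∃ k : ℕ, K ≤ k ∧
      ∃ d : ℝ, d ≤ 2 / 3 ∧
        Filter.Tendsto
          (fun N : ℕ =>
            (((Finset.range (N + 1)).filter (fun n => Odd (p n k))).card : ℝ) / N)
          Filter.atTop (nhds d) := by
  intro K hK
  obtain ⟨Q₀, hQ₀, hper₀⟩ := exists_periodic_odd_p hK
  obtain ⟨Q₁, hQ₁, hper₁⟩ := exists_periodic_odd_p (by omega : 0 < K + 1)
  have hP : 0 < Q₀ * Q₁ := Nat.mul_pos hQ₀ hQ₁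
  have h₀ : Periodic (fun n => Odd (p n K)) (Q₀ * Q₁) :=
    mul_comm Q₁ Q₀ ▸ hper₀.nat_mul Q₁
  have h₁ : Periodic (fun n => Odd (p n (K + 1))) (Q₀ * Q₁) := hper₁.nat_mul Q₀
  have hcount := count_odd_p_add_two_mul_count_odd_p_le h₀ h₁
  by_cases h : 3 * count (fun n => Odd (p n (K + 1))) (Q₀ * Q₁) ≤ 2 * (Q₀ * Q₁)
  · exact ⟨K + 1, K.le_succ, exists_odd_density_le_two_thirds hP h₁ h⟩
  · exact ⟨K, le_rfl, exists_odd_density_le_two_thirds hP h₀ (by omega)⟩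
end

section
/- For every positive integer k, the odd density of p(·,k) is at least 2/(k(k+1)): lim_{N→∞} #{n ≤ N : p(n,k) is odd}/N ≥ 2/(k(k+1)). -/
open Filter Topology Finset Polynomial
open scoped PowerSeries PowerSeries.WithPiTopology

theorem p_eq_card_restricted (n k : ℕ) : p n k = #(Nat.Partition.restricted n (· ≤ k)) := rfl

theorem powerSeriesMk_p_mul_prod_one_sub_X_pow_int (k : ℕ) :
    (PowerSeries.mk fun n ↦ (p n k : ℤ)) * ∏ i ∈ range k, (1 - PowerSeries.X ^ (i + 1)) = 1 := by
  rw [funext fun n ↦ congrArg (Nat.cast (R := ℤ)) (p_eq_card_restricted n k),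
    Nat.Partition.powerSeriesMk_card_restricted_eq_tprod, tprod_eq_prod (s := range k)]
  · rw [← prod_mul_distrib]
    refine prod_eq_one fun i hi ↦ ?_
    rw [if_pos (by simpa using hi)]
    simp_rw [pow_mul]
    exact PowerSeries.WithPiTopology.tsum_pow_mul_one_sub_of_constantCoeff_eq_zero (by simp)
  · intro i hi
    rw [if_neg (by simpa using hi)]

theorem powerSeriesMk_p_mul_prod_one_sub_X_pow (R : Type*) [CommRing R] (k : ℕ) :
    (PowerSeries.mk fun n ↦ (p n k : R)) * ∏ i ∈ range k, (1 - PowerSeries.X ^ (i + 1)) = 1 := by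
  have hmap : PowerSeries.map (Int.castRingHom R) (PowerSeries.mk fun n ↦ (p n k : ℤ)) =
      PowerSeries.mk fun n ↦ (p n k : R) := by
    ext
    simp
  simpa [hmap] using
    congrArg (PowerSeries.map (Int.castRingHom R)) (powerSeriesMk_p_mul_prod_one_sub_X_pow_int k)

theorem two_mul_natDegree_prod_one_sub_X_pow {R : Type*} [CommRing R] [NoZeroDivisors R]
    [Nontrivial R] (k : ℕ) :
    2 * (∏ i ∈ range k, (1 - X ^ (i + 1) : R[X])).natDegree = k * (k + 1) := by
  have hdeg (i : ℕ) : (1 - X ^ (i + 1) : R[X]).natDegree = i + 1 := by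
    rw [← neg_sub, natDegree_neg, ← C_1, natDegree_X_pow_sub_C]
  rw [natDegree_prod _ _ fun i _ ↦ ne_zero_of_natDegree_gt (n := 0) (by rw [hdeg]; omega)]
  have hsum : ∑ i ∈ range k, (i + 1) = ∑ i ∈ range (k + 1), i := by simp [sum_range_succ']
  rw [sum_congr rfl fun i _ ↦ hdeg i, hsum, mul_comm, sum_range_id_mul_two, add_tsub_cancel_right,
    mul_comm]

section RationalPowerSeries

variable {K : Type*} [Field K] {g : K[X]} {F : K⟦X⟧}

theorem coeff_eq_zero_of_mul_eq_one_of_coeff_add_eq_zero (hgF : (g : K⟦X⟧) * F = 1)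
    (hg : 0 < g.natDegree) {m : ℕ} (h : ∀ t < g.natDegree, PowerSeries.coeff (m + 1 + t) F = 0) :
    PowerSeries.coeff m F = 0 := by
  -- the only surviving term of the coefficient `m + deg g` of `g * F` is `lc(g) * F_m`
  have hcoeff := congrArg (PowerSeries.coeff (m + g.natDegree)) hgF
  rw [PowerSeries.coeff_mul, PowerSeries.coeff_one, if_neg (by omega),
    sum_eq_single_of_mem (g.natDegree, m)
      (HasAntidiagonal.mem_antidiagonal.2 (add_comm _ _))] at hcoeff
  · simpa [Polynomial.coeff_coe, hg.ne', ne_zero_of_natDegree_gt hg] using hcoeff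
  rintro ⟨i, j⟩ hij hne
  rw [HasAntidiagonal.mem_antidiagonal] at hij
  rcases lt_trichotomy i g.natDegree with hi | rfl | hi
  · rw [show j = m + 1 + (g.natDegree - 1 - i) by omega, h _ (by omega), mul_zero]
  · exact absurd (by simp; omega) hne
  · rw [Polynomial.coeff_coe, coeff_eq_zero_of_natDegree_lt hi, zero_mul]

theorem exists_lt_natDegree_coeff_ne_zero (hgF : (g : K⟦X⟧) * F = 1) (hg : 0 < g.natDegree)
    (m : ℕ) : ∃ t < g.natDegree, PowerSeries.coeff (m + t) F ≠ 0 := by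
  by_contra! h
  induction m with
  | zero =>
    have hF0 := h 0 hg
    rw [add_zero, PowerSeries.coeff_zero_eq_constantCoeff_apply] at hF0
    simpa [hF0] using congrArg PowerSeries.constantCoeff hgF
  | succ m ih =>
    refine ih fun t ht ↦ ?_
    cases t with
    | zero => exact coeff_eq_zero_of_mul_eq_one_of_coeff_add_eq_zero hgF hg h
    | succ t =>
      rw [show m + (t + 1) = m + 1 + t by omega]
      exact h t (by omega)

theorem exists_dvd_X_pow_sub_one [Finite K] (hg : g.coeff 0 ≠ 0) :
    ∃ T, 0 < T ∧ g ∣ X ^ T - 1 := by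
  have hg0 : g ≠ 0 := fun h ↦ hg (by simp [h])
  have := (AdjoinRoot.powerBasis hg0).finite
  have : Finite (AdjoinRoot g) := Module.finite_of_finite K
  obtain ⟨q, hq⟩ := X_dvd_sub_C (p := g)
  have hroot : AdjoinRoot.root g * AdjoinRoot.mk g (-C (g.coeff 0)⁻¹ * q) = 1 := by
    have := congrArg (AdjoinRoot.mk g) hq
    simp only [map_sub, AdjoinRoot.mk_self, map_mul, AdjoinRoot.mk_X] at this
    rw [map_mul, mul_left_comm, ← this, zero_sub, map_neg, neg_mul_neg, ← map_mul, ← C_mul,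
      inv_mul_cancel₀ hg, C_1, map_one]
  set u := (IsUnit.of_mul_eq_one _ hroot).unit
  refine ⟨orderOf u, orderOf_pos u, AdjoinRoot.mk_eq_zero.1 ?_⟩
  have hu : AdjoinRoot.root g ^ orderOf u = 1 := by
    have := congrArg Units.val (pow_orderOf_eq_one u)
    rwa [Units.val_pow_eq_pow_val, IsUnit.unit_spec, Units.val_one] at this
  simp [AdjoinRoot.mk_X, hu]

theorem exists_periodic_coeff_of_mul_eq_one [Finite K] (hgF : (g : K⟦X⟧) * F = 1)
    (hg : 0 < g.natDegree) :
    ∃ T, 0 < T ∧ Function.Periodic (fun n ↦ PowerSeries.coeff n F) T := by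
  have hg0 : g.coeff 0 ≠ 0 := by
    have := congrArg PowerSeries.constantCoeff hgF
    rw [map_mul, map_one, ← PowerSeries.coeff_zero_eq_constantCoeff_apply,
      Polynomial.coeff_coe] at this
    exact left_ne_zero_of_mul_eq_one this
  obtain ⟨T, hT, q, hgq⟩ := exists_dvd_X_pow_sub_one hg0
  have hdeg : q.natDegree < T := by
    have := congrArg natDegree hgq
    rw [← C_1, natDegree_X_pow_sub_C, natDegree_mul (ne_zero_of_natDegree_gt hg)] at this
    · omega
    · rintro rfl
      simp at this
      omega
  have hF : ((PowerSeries.X : K⟦X⟧) ^ T - 1) * F = q := by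
    have hcoe : ((X ^ T - 1 : K[X]) : K⟦X⟧) = PowerSeries.X ^ T - 1 := by simp
    rw [← hcoe, hgq, Polynomial.coe_mul, mul_right_comm, hgF, one_mul]
  refine ⟨T, hT, fun n ↦ ?_⟩
  have := congrArg (PowerSeries.coeff (n + T)) hF
  rw [sub_mul, one_mul, map_sub, PowerSeries.coeff_X_pow_mul', if_pos (by omega),
    Nat.add_sub_cancel, Polynomial.coeff_coe, coeff_eq_zero_of_natDegree_lt (by omega),
    sub_eq_zero] at this
  exact this.symm

end RationalPowerSeries

namespace Nat

variable {P : ℕ → Prop} [DecidablePred P] {T : ℕ}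

theorem count_mul_add_of_periodic (hP : Function.Periodic P T) (q r : ℕ) :
    count P (q * T + r) = q * count P T + count P r := by
  have hshift : ∀ q r, count P (q * T + r) = count P (q * T) + count P r := fun q r ↦ by
    rw [count_add]
    congr 2
    ext k
    rw [add_comm, ← smul_eq_mul, hP.nsmul q k]
  have hmul (q : ℕ) : count P (q * T) = q * count P T := by
    induction q with
    | zero => simp
    | succ q ih => rw [succ_mul, hshift, ih, succ_mul]
  rw [hshift, hmul]

theorem tendsto_count_div_of_periodic (hP : Function.Periodic P T) (hT : 0 < T) :
    Tendsto (fun n : ℕ ↦ (count P n : ℝ) / n) atTop (𝓝 (count P T / T)) := by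
  set c := count P T
  have hTR : (0 : ℝ) < T := by exact_mod_cast hT
  have hbound (n : ℕ) : |(count P n : ℝ) - n * c / T| ≤ c := by
    have hn : count P n = n / T * c + count P (n % T) := by
      rw [← count_mul_add_of_periodic hP, div_add_mod' n T]
    have hr : count P (n % T) ≤ c := count_monotone P (mod_lt n hT).le
    have hs : ((n % T : ℕ) : ℝ) * c / T ≤ c := by
      rw [div_le_iff₀ hTR, mul_comm]
      exact mul_le_mul_of_nonneg_left (by exact_mod_cast (mod_lt n hT).le) (by positivity)
    have hsplit :
        (count P n : ℝ) - n * c / T = count P (n % T) - ((n % T : ℕ) : ℝ) * c / T := by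
      have hnR : (n : ℝ) = (n / T : ℕ) * T + (n % T : ℕ) := by
        exact_mod_cast (div_add_mod' n T).symm
      rw [hn, hnR]
      push_cast
      field_simp
      ring
    have hr' : (count P (n % T) : ℝ) ≤ c := by exact_mod_cast hr
    have hs0 : 0 ≤ ((n % T : ℕ) : ℝ) * c / T := by positivity
    rw [hsplit, abs_sub_le_iff]
    constructor <;> linarith [(count P (n % T)).cast_nonneg (α := ℝ)]
  rw [tendsto_iff_norm_sub_tendsto_zero]
  refine squeeze_zero' (Eventually.of_forall fun _ ↦ norm_nonneg _) ?_
    (tendsto_const_div_atTop_nhds_zero_nat (c : ℝ))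
  filter_upwards [eventually_gt_atTop 0] with n hn
  have hnR : (0 : ℝ) < n := by exact_mod_cast hn
  rw [Real.norm_eq_abs, show (count P n : ℝ) / n - c / T = ((count P n : ℝ) - n * c / T) / n by
    field_simp, abs_div, abs_of_pos hnR]
  exact div_le_div_of_nonneg_right (hbound n) hnR.le

theorem le_count_mul_of_forall_exists {D : ℕ} (hP : ∀ m, ∃ t < D, P (m + t)) (q : ℕ) :
    q ≤ count P (D * q) := by
  induction q with
  | zero => simp
  | succ q ih =>
    obtain ⟨t, ht, hPt⟩ := hP (D * q)
    have hwindow : 1 ≤ count (fun k ↦ P (D * q + k)) D :=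
      calc 1 ≤ count (fun k ↦ P (D * q + k)) (t + 1) := by simp [count_succ, hPt]
        _ ≤ _ := count_monotone _ ht
    rw [mul_add_one, count_add]
    omega

theorem one_div_le_count_div_of_periodic {D : ℕ} (hP : Function.Periodic P T) (hT : 0 < T)
    (hwin : ∀ m, ∃ t < D, P (m + t)) : (1 : ℝ) / D ≤ count P T / T := by
  obtain ⟨t, htD, -⟩ := hwin 0
  have hcount : T ≤ D * count P T := by
    have := le_count_mul_of_forall_exists hwin T
    rwa [← add_zero (D * T), count_mul_add_of_periodic hP, count_zero, add_zero] at this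
  rw [div_le_div_iff₀ (by exact_mod_cast (by omega : 0 < D)) (by exact_mod_cast hT), one_mul]
  exact_mod_cast hcount.trans_eq (mul_comm _ _)

end Nat

theorem tendsto_succ_div_of_tendsto_div {f : ℕ → ℝ} {d : ℝ}
    (hf : Tendsto (fun n : ℕ ↦ f n / n) atTop (𝓝 d)) :
    Tendsto (fun n : ℕ ↦ f (n + 1) / n) atTop (𝓝 d) := by
  have hshift : Tendsto (fun n : ℕ ↦ f (n + 1) / (n + 1 : ℕ)) atTop (𝓝 d) :=
    (tendsto_add_atTop_iff_nat 1).2 hf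
  have hratio : Tendsto (fun n : ℕ ↦ 1 + 1 / (n : ℝ)) atTop (𝓝 1) := by
    simpa using (tendsto_const_div_atTop_nhds_zero_nat (1 : ℝ)).const_add 1
  refine (mul_one d ▸ hshift.mul hratio).congr' ?_
  filter_upwards [eventually_gt_atTop 0] with n hn
  have hnR : (n : ℝ) ≠ 0 := by exact_mod_cast hn.ne'
  push_cast
  field_simp

theorem stmt_11 (k : ℕ) (hk : 0 < k) :
    ∃ d : ℝ, 2 / (k * (k + 1)) ≤ d ∧
      Filter.Tendsto
        (fun N : ℕ =>
          (((Finset.range (N + 1)).filter (fun n => Odd (p n k))).card : ℝ) / N)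
        Filter.atTop (nhds d) := by
  set g : (ZMod 2)[X] := ∏ i ∈ range k, (1 - X ^ (i + 1))
  set F : (ZMod 2)⟦X⟧ := PowerSeries.mk fun n ↦ (p n k : ZMod 2)
  have hgF : (g : (ZMod 2)⟦X⟧) * F = 1 := by
    have hcoe : (g : (ZMod 2)⟦X⟧) = ∏ i ∈ range k, (1 - PowerSeries.X ^ (i + 1)) := by
      rw [← coeToPowerSeries.ringHom_apply, map_prod]
      simp
    rw [mul_comm, hcoe]
    exact powerSeriesMk_p_mul_prod_one_sub_X_pow (ZMod 2) k
  have hD : 2 * g.natDegree = k * (k + 1) := two_mul_natDegree_prod_one_sub_X_pow k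
  have hg : 0 < g.natDegree := by nlinarith
  have hodd (n : ℕ) : Odd (p n k) ↔ PowerSeries.coeff n F ≠ 0 := by
    simp [F, ZMod.natCast_ne_zero_iff_odd]
  obtain ⟨T, hT, hper⟩ := exists_periodic_coeff_of_mul_eq_one hgF hg
  have hP : Function.Periodic (fun n ↦ Odd (p n k)) T := fun n ↦ by
    simp only [hodd, hper n]
  have hwin (m : ℕ) : ∃ t < g.natDegree, Odd (p (m + t) k) := by
    simpa only [hodd] using exists_lt_natDegree_coeff_ne_zero hgF hg m
  refine ⟨Nat.count (fun n ↦ Odd (p n k)) T / T, ?_, ?_⟩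
  · have hkR : (k : ℝ) * (k + 1) = 2 * g.natDegree := by exact_mod_cast hD.symm
    rw [hkR, div_mul_cancel_left₀ two_ne_zero, ← one_div]
    exact Nat.one_div_le_count_div_of_periodic hP hT hwin
  · simp_rw [← Nat.count_eq_card_filter_range]
    exact tendsto_succ_div_of_tendsto_div (Nat.tendsto_count_div_of_periodic hP hT)
end
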